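/- Let δ ∈ (0,1/2), N > 0, λ > 0. For every u ∈ ℝ with u ≤ δ, the quantity [u]₊[1-u]₊·(f₁'(δ) + f₁''(δ)(u-δ) + λ(1-2u)), where f₁(s) = N⁻¹ s log s + (1-s) log(1-s), is bounded above by a constant depending only on N and λ (independent of δ and u). -/
import Mathlib


theorem stmt_9 (N lam : ℝ) (hN : 0 < N) (hlam : 0 < lam) :
    ∃ C : ℝ, 0 < C ∧ ∀ δ ∈ Set.Ioo (0 : ℝ) (1/2), ∀ u : ℝ, u ≤ δ →
      max u 0 * max (1 - u) 0 *
        ((N⁻¹ * (Real.log δ + 1) - Real.log (1 - δ) - 1)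
          + (1 / (N * δ) + 1 / (1 - δ)) * (u - δ) + lam * (1 - 2 * u)) ≤ C := by
  have hlog2 : 0 < Real.log 2 := Real.log_pos one_lt_two
  refine ⟨N⁻¹ + Real.log 2 + lam, by positivity, ?_⟩
  rintro δ ⟨hδ0, hδh⟩ u hu
  by_cases hu0 : u ≤ 0
  · rw [max_eq_right hu0, zero_mul, zero_mul]
    positivity
  push_neg at hu0
  rw [max_eq_left hu0.le, max_eq_left (by linarith : (0:ℝ) ≤ 1 - u)]
  have h1δ : 0 < 1 - δ := by linarith
  have hlogδ : Real.log δ < 0 := Real.log_neg hδ0 (by linarith)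
  have hlog1δ : Real.log (1/2) < Real.log (1 - δ) :=
    Real.log_lt_log (by norm_num) (by linarith)
  rw [one_div, Real.log_inv] at hlog1δ
  have hc : 0 < 1 / (N * δ) + 1 / (1 - δ) := by positivity
  have ht : (1 / (N * δ) + 1 / (1 - δ)) * (u - δ) ≤ 0 :=
    mul_nonpos_of_nonneg_of_nonpos hc.le (by linarith)
  have hNinv : 0 < N⁻¹ := inv_pos.mpr hN
  have h1 : N⁻¹ * (Real.log δ + 1) ≤ N⁻¹ := by nlinarith
  have h2 : lam * (1 - 2 * u) ≤ lam := by nlinarith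
  have hA : (N⁻¹ * (Real.log δ + 1) - Real.log (1 - δ) - 1)
      + (1 / (N * δ) + 1 / (1 - δ)) * (u - δ) + lam * (1 - 2 * u)
      ≤ N⁻¹ + Real.log 2 + lam := by linarith
  have hP : 0 ≤ u * (1 - u) := by nlinarith
  calc u * (1 - u) * _ ≤ u * (1 - u) * (N⁻¹ + Real.log 2 + lam) :=
        mul_le_mul_of_nonneg_left hA hP
    _ ≤ N⁻¹ + Real.log 2 + lam := by
        have hP1 : u * (1 - u) ≤ 1 := by nlinarith
        have hB : (0:ℝ) < N⁻¹ + Real.log 2 + lam := by positivity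
        nlinarith [mul_le_mul_of_nonneg_right hP1 hB.le]
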